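/- Let f(γ) = 2γ − Σ_{k≥1} k·ε_k/2^k for γ ∈ [1/2, 1) with binary digits (ε_k) (infinitely many zeros convention), and let T₀(x,y) = (x/2 + 1/4, (1−x+y)/2) and T₁(x,y) = (x/2 + 1/2, (1−x+y)/2). Then for every γ ∈ [1/2, 1): T₀(γ, f(γ)) = (γ/2 + 1/4, f(γ/2 + 1/4)) and T₁(γ, f(γ)) = (γ/2 + 1/2, f(γ/2 + 1/2)); i.e., the graph of f over [1/2,1) is invariant under the iterated function system {T₀, T₁} restricted to points of the graph. -/

import Mathlib

/-!
Write `S x = ∑_{k≥1} k ε_k(x) 2^{-k}`, so that `f x = 2x - S x`. Since `ε_{k+1}(x) = ε_k(2x)` and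
`∑ ε_k(x) 2^{-k} = fract x`, splitting off the first digit and writing the weight `k + 1` of
`ε_{k+1}(x)` as `k` plus `1` gives `S x = ε_1(x)/2 + (S (2x) + fract (2x))/2 = S (2x)/2 + fract x`
for every real `x`, i.e. `2 f x = f (2x) - 2 fract x`. Digits are invariant under integer
translation, so `f (x + n) = f x + 2n`. Both halves of the theorem follow by applying these two
identities at `γ/2 + 1/4`, `γ + 1/2`, `γ` and at `γ/2 + 1/2`.
-/

/-- The `k`-th binary digit of `x` (for `k ≥ 1`), via the floor expansion; this is the
expansion with infinitely many zero digits. -/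
noncomputable def binDigit (x : ℝ) (k : ℕ) : ℤ :=
  ⌊2 ^ k * x⌋ - 2 * ⌊2 ^ (k - 1) * x⌋

/-- `f(γ) = 2γ − Σ_{k≥1} k ε_k 2^{-k}`. -/
noncomputable def fSteinhaus (γ : ℝ) : ℝ :=
  2 * γ - ∑' k : ℕ, ((k + 1 : ℕ) : ℝ) * (binDigit γ (k + 1) : ℝ) / 2 ^ (k + 1)

/-- `T₀(x,y) = (x/2 + 1/4, (1 − x + y)/2)`. -/
noncomputable def T0 (v : ℝ × ℝ) : ℝ × ℝ := (v.1 / 2 + 1 / 4, (1 - v.1 + v.2) / 2)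

/-- `T₁(x,y) = (x/2 + 1/2, (1 − x + y)/2)`. -/
noncomputable def T1 (v : ℝ × ℝ) : ℝ × ℝ := (v.1 / 2 + 1 / 2, (1 - v.1 + v.2) / 2)

open Filter Topology Finset

lemma binDigit_succ (x : ℝ) (k : ℕ) :
    binDigit x (k + 1) = ⌊2 ^ (k + 1) * x⌋ - 2 * ⌊2 ^ k * x⌋ := rfl

lemma binDigit_nonneg (x : ℝ) (k : ℕ) : 0 ≤ binDigit x (k + 1) := by
  have h : ((2 * ⌊2 ^ k * x⌋ : ℤ) : ℝ) ≤ 2 ^ (k + 1) * x := by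
    push_cast; rw [pow_succ]; linarith [Int.floor_le ((2 : ℝ) ^ k * x)]
  rw [binDigit_succ]; linarith [Int.le_floor.2 h]

lemma binDigit_le_one (x : ℝ) (k : ℕ) : binDigit x (k + 1) ≤ 1 := by
  have h : (2 : ℝ) ^ (k + 1) * x < ((2 * ⌊2 ^ k * x⌋ + 2 : ℤ) : ℝ) := by
    push_cast; rw [pow_succ]; linarith [Int.lt_floor_add_one ((2 : ℝ) ^ k * x)]
  rw [binDigit_succ]; linarith [Int.floor_lt.2 h]

lemma binDigit_two_mul (x : ℝ) (k : ℕ) : binDigit (2 * x) (k + 1) = binDigit x (k + 2) := by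
  rw [binDigit_succ, binDigit_succ, ← mul_assoc, ← mul_assoc, ← pow_succ, ← pow_succ]

lemma binDigit_add_intCast (x : ℝ) (n : ℤ) (k : ℕ) :
    binDigit (x + n) (k + 1) = binDigit x (k + 1) := by
  have hshift (j : ℕ) : (2 : ℝ) ^ j * (x + n) = 2 ^ j * x + ((2 ^ j * n : ℤ) : ℝ) := by
    push_cast; ring
  rw [binDigit_succ, binDigit_succ, hshift, hshift, Int.floor_add_intCast, Int.floor_add_intCast]
  ring

lemma binDigit_one_add_fract_two_mul (x : ℝ) :
    (binDigit x 1 : ℝ) + Int.fract (2 * x) = 2 * Int.fract x := by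
  simp only [binDigit, Int.fract, pow_one, pow_zero, one_mul, Nat.sub_self]
  push_cast; ring

lemma sum_range_binDigit_div (x : ℝ) (n : ℕ) :
    ∑ k ∈ range n, (binDigit x (k + 1) : ℝ) / 2 ^ (k + 1) = ⌊2 ^ n * x⌋ / 2 ^ n - ⌊x⌋ := by
  induction n with
  | zero => simp
  | succ n ih =>
    rw [sum_range_succ, ih, binDigit_succ]
    push_cast
    field_simp
    ring

lemma tendsto_floor_two_pow_mul_div (x : ℝ) :
    Tendsto (fun n : ℕ ↦ (⌊2 ^ n * x⌋ : ℝ) / 2 ^ n) atTop (𝓝 x) := by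
  have hgeom : Tendsto (fun n : ℕ ↦ x - (1 / 2 : ℝ) ^ n) atTop (𝓝 x) := by
    simpa using tendsto_const_nhds.sub
      (tendsto_pow_atTop_nhds_zero_of_lt_one (r := (1 / 2 : ℝ)) (by norm_num) (by norm_num))
  refine tendsto_of_tendsto_of_tendsto_of_le_of_le hgeom tendsto_const_nhds (fun n ↦ ?_)
    (fun n ↦ ?_)
  · rw [le_div_iff₀ (by positivity), sub_mul, one_div_pow, div_mul_cancel₀ _ (by positivity)]
    linarith [Int.lt_floor_add_one ((2 : ℝ) ^ n * x)]
  · rw [div_le_iff₀ (by positivity), mul_comm x]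
    exact Int.floor_le _

lemma hasSum_binDigit_div_fract (x : ℝ) :
    HasSum (fun k : ℕ ↦ (binDigit x (k + 1) : ℝ) / 2 ^ (k + 1)) (Int.fract x) := by
  rw [hasSum_iff_tendsto_nat_of_nonneg (fun k ↦ by have := binDigit_nonneg x k; positivity)]
  simp only [sum_range_binDigit_div]
  exact (tendsto_floor_two_pow_mul_div x).sub_const _

noncomputable def weightedDigitSum (x : ℝ) : ℝ :=
  ∑' k : ℕ, ((k + 1 : ℕ) : ℝ) * (binDigit x (k + 1) : ℝ) / 2 ^ (k + 1)

lemma fSteinhaus_eq_two_mul_sub (x : ℝ) : fSteinhaus x = 2 * x - weightedDigitSum x := rfl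

lemma summable_weightedDigitSum (x : ℝ) :
    Summable (fun k : ℕ ↦ ((k + 1 : ℕ) : ℝ) * (binDigit x (k + 1) : ℝ) / 2 ^ (k + 1)) := by
  have hmajor : Summable (fun k : ℕ ↦ ((k + 1 : ℕ) : ℝ) * (1 / 2 : ℝ) ^ (k + 1)) := by
    have := summable_pow_mul_geometric_of_norm_lt_one 1 (r := (1 / 2 : ℝ)) (by norm_num)
    simpa using (summable_nat_add_iff 1).2 this
  refine hmajor.of_nonneg_of_le (fun k ↦ by have := binDigit_nonneg x k; positivity) fun k ↦ ?_
  rw [one_div_pow, ← div_eq_mul_one_div]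
  gcongr ?_ / _
  exact mul_le_of_le_one_right (by positivity) (by exact_mod_cast binDigit_le_one x k)

lemma weightedDigitSum_add_intCast (x : ℝ) (n : ℤ) :
    weightedDigitSum (x + n) = weightedDigitSum x := by
  simp only [weightedDigitSum, binDigit_add_intCast]

lemma weightedDigitSum_eq_two_mul_div_two_add_fract (x : ℝ) :
    weightedDigitSum x = weightedDigitSum (2 * x) / 2 + Int.fract x := by
  have htail : HasSum (fun k : ℕ ↦ ((k + 2 : ℕ) : ℝ) * (binDigit x (k + 2) : ℝ) / 2 ^ (k + 2))
      (weightedDigitSum (2 * x) / 2 + Int.fract (2 * x) / 2) := by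
    refine (((summable_weightedDigitSum (2 * x)).hasSum.div_const 2).add
      ((hasSum_binDigit_div_fract (2 * x)).div_const 2)).congr_fun fun k ↦ ?_
    rw [← binDigit_two_mul]
    push_cast
    ring
  refine (htail.zero_add (f := fun k : ℕ ↦
    ((k + 1 : ℕ) : ℝ) * (binDigit x (k + 1) : ℝ) / 2 ^ (k + 1))).tsum_eq.trans ?_
  push_cast
  linear_combination binDigit_one_add_fract_two_mul x / 2

lemma fSteinhaus_add_intCast (x : ℝ) (n : ℤ) : fSteinhaus (x + n) = fSteinhaus x + 2 * n := by
  rw [fSteinhaus_eq_two_mul_sub, fSteinhaus_eq_two_mul_sub, weightedDigitSum_add_intCast]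
  ring

lemma two_mul_fSteinhaus (x : ℝ) : 2 * fSteinhaus x = fSteinhaus (2 * x) - 2 * Int.fract x := by
  rw [fSteinhaus_eq_two_mul_sub, fSteinhaus_eq_two_mul_sub, weightedDigitSum_eq_two_mul_div_two_add_fract x]
  ring

/-- the graph of `f` over `[1/2,1)` is invariant under the IFS `{T₀, T₁}`:
`T₀(γ, f(γ)) = (γ/2+1/4, f(γ/2+1/4))` and `T₁(γ, f(γ)) = (γ/2+1/2, f(γ/2+1/2))`. -/
theorem graph_f_IFS_invariant (γ : ℝ) (h1 : 1 / 2 ≤ γ) (h2 : γ < 1) :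
    T0 (γ, fSteinhaus γ) = (γ / 2 + 1 / 4, fSteinhaus (γ / 2 + 1 / 4)) ∧
      T1 (γ, fSteinhaus γ) = (γ / 2 + 1 / 2, fSteinhaus (γ / 2 + 1 / 2)) := by
  have fract_eq_sub (y : ℝ) (n : ℤ) (hl : (n : ℝ) ≤ y) (hu : y < n + 1) : Int.fract y = y - n := by
    rw [Int.fract, Int.floor_eq_iff.2 ⟨hl, hu⟩]
  have hγ := two_mul_fSteinhaus γ
  have hfract_γ := fract_eq_sub γ 0 (by push_cast; linarith) (by push_cast; linarith)
  have hperiod := fSteinhaus_add_intCast (2 * γ) 1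
  refine ⟨Prod.ext rfl ?_, Prod.ext rfl ?_⟩
  · have hquarter := two_mul_fSteinhaus (γ / 2 + 1 / 4)
    have hhalf := two_mul_fSteinhaus (γ + 1 / 2)
    rw [fract_eq_sub _ 0 (by push_cast; linarith) (by push_cast; linarith)] at hquarter
    rw [fract_eq_sub _ 1 (by push_cast; linarith) (by push_cast; linarith)] at hhalf
    rw [show 2 * (γ / 2 + 1 / 4) = γ + 1 / 2 by ring] at hquarter
    rw [show 2 * (γ + 1 / 2) = 2 * γ + (1 : ℤ) by push_cast; ring] at hhalf
    simp only [T0]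
    push_cast at *
    linarith
  · have hhalf := two_mul_fSteinhaus (γ / 2 + 1 / 2)
    have hshift := fSteinhaus_add_intCast γ 1
    rw [fract_eq_sub _ 0 (by push_cast; linarith) (by push_cast; linarith)] at hhalf
    rw [show 2 * (γ / 2 + 1 / 2) = γ + (1 : ℤ) by push_cast; ring] at hhalf
    simp only [T1]
    push_cast at *
    linarith
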